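/- Let $X$ be a compact metric space and let $K$ be a CW-complex (or more concretely, take $K = S^n$). If every connected component of $X$ has covering dimension at most $n$, then $X$ has covering dimension at most $n$. -/

import Mathlib

/-!
Fix an open cover `U`. On a component `C`, the hypothesis gives a finite open refinement of order
`≤ n + 1`; shrinking it to a closed cover yields compact sets in `X` of order `≤ n + 1`, and small
metric thickenings of these are open, still refine `U` and still have order `≤ n + 1` (a finite
family of compact sets with empty intersection has thickenings with empty intersection).
Their union is a neighbourhood of `C`, hence contains a clopen neighbourhood of `C`, since in a
compact Hausdorff space components are intersections of clopen sets. Finitely many such clopen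
sets cover `X`; disjointifying them and restricting each local refinement to its piece gives the
global refinement.
-/

open Set Metric

def CovDimLE (X : Type*) [TopologicalSpace X] (n : ℕ) : Prop :=
  ∀ (ι : Type) (U : ι → Set X), (∀ i, IsOpen (U i)) → (⋃ i, U i) = Set.univ →
    ∃ (κ : Type) (V : κ → Set X),
      (∀ j, IsOpen (V j)) ∧ (⋃ j, V j) = Set.univ ∧ (∀ j, ∃ i, V j ⊆ U i) ∧
      ∀ x : X, {j | x ∈ V j}.Finite ∧ {j | x ∈ V j}.ncard ≤ n + 1

open Filter Topology

lemma forall_ncard_setOf_mem_le_iff {X ι : Type*} [Finite ι] {G : ι → Set X} {N : ℕ} :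
    (∀ x, {j | x ∈ G j}.ncard ≤ N) ↔ ∀ S : Finset ι, S.card = N + 1 → ⋂ j ∈ S, G j = ∅ := by
  constructor
  · intro h S hS
    refine eq_empty_of_forall_notMem fun x hx => ?_
    have hSx : (S : Set ι) ⊆ {j | x ∈ G j} := fun j hj => mem_iInter₂.1 hx j hj
    have := (ncard_le_ncard hSx (toFinite _)).trans (h x)
    rw [ncard_coe_finset] at this
    omega
  · intro h x
    by_contra! hx
    have hfin := toFinite {j | x ∈ G j}
    obtain ⟨S, hSx, hS⟩ := hfin.toFinset.exists_subset_card_eq (n := N + 1)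
      (by rw [← ncard_eq_toFinset_card _ hfin]; omega)
    have : x ∈ ⋂ j ∈ S, G j := mem_iInter₂.2 fun j hj => by simpa using hSx hj
    rwa [h S hS] at this

lemma IsCompact.eventually_thickening_subset {X : Type*} [PseudoMetricSpace X] {s t : Set X}
    (hs : IsCompact s) (ht : IsOpen t) (hst : s ⊆ t) :
    ∀ᶠ ε in 𝓝[>] (0 : ℝ), thickening ε s ⊆ t := by
  obtain ⟨δ, hδ, hδt⟩ := hs.exists_thickening_subset_open ht hst
  filter_upwards [Ioo_mem_nhdsGT hδ] with ε hε
  exact (thickening_mono hε.2.le s).trans hδt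

/- A point of `⋂ j ∈ S, thickening ε (F j)` is `ε`-close to some `y ∈ F j₀`, and `y` then lies in
every `cthickening (2 * ε) (F j)`; by compactness of `F j₀`, for small `ε` no point of `F j₀` does. -/
lemma eventually_biInter_thickening_eq_empty {X ι : Type*} [MetricSpace X] {F : ι → Set X}
    {S : Finset ι} (hF : ∀ j ∈ S, IsCompact (F j)) (hS : ⋂ j ∈ S, F j = ∅) :
    ∀ᶠ ε in 𝓝[>] (0 : ℝ), ⋂ j ∈ S, thickening ε (F j) = ∅ := by
  obtain rfl | ⟨j₀, hj₀⟩ := S.eq_empty_or_nonempty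
  · simp_all
  have hF₀ : F j₀ ∩ ⋂ δ : Ioi (0 : ℝ), ⋂ j ∈ S, cthickening δ (F j) = ∅ := by
    refine eq_empty_of_forall_notMem fun x ⟨_, hx⟩ => ?_
    refine (eq_empty_iff_forall_notMem.1 hS) x (mem_iInter₂.2 fun j hj => ?_)
    rw [← (hF j hj).isClosed.closure_eq, closure_eq_iInter_cthickening]
    exact mem_iInter₂.2 fun ε hε => mem_iInter₂.1 (mem_iInter.1 hx ⟨ε, hε⟩) j hj
  obtain ⟨⟨δ, hδ⟩, hδS⟩ := (hF j₀ hj₀).elim_directed_family_closed _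
    (fun _ => isClosed_biInter fun _ _ => isClosed_cthickening) hF₀
    (Monotone.directed_ge fun a b hab => iInter₂_mono fun j _ => cthickening_mono hab (F j))
  filter_upwards [Ioo_mem_nhdsGT (half_pos hδ)] with ε hε
  refine eq_empty_of_forall_notMem fun x hx => ?_
  obtain ⟨y, hy, hxy⟩ := mem_thickening_iff.1 (mem_iInter₂.1 hx j₀ hj₀)
  refine (eq_empty_iff_forall_notMem.1 hδS) y ⟨hy, mem_iInter₂.2 fun j hj => ?_⟩
  obtain ⟨z, hz, hxz⟩ := mem_thickening_iff.1 (mem_iInter₂.1 hx j hj)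
  refine mem_cthickening_of_dist_le y z δ _ hz ?_
  calc dist y z ≤ dist y x + dist x z := dist_triangle y x z
    _ ≤ δ := by rw [dist_comm] at hxy; linarith [hε.2]

lemma eventually_ncard_thickening_le {X ι : Type*} [MetricSpace X] [Finite ι] {F : ι → Set X}
    (hF : ∀ j, IsCompact (F j)) {N : ℕ} (hN : ∀ x, {j | x ∈ F j}.ncard ≤ N) :
    ∀ᶠ ε in 𝓝[>] (0 : ℝ), ∀ x, {j | x ∈ thickening ε (F j)}.ncard ≤ N := by
  simp_rw [forall_ncard_setOf_mem_le_iff] at hN ⊢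
  exact eventually_all.2 fun S => eventually_imp_distrib_left.2 fun hS =>
    eventually_biInter_thickening_eq_empty (fun j _ => hF j) (hN S hS)

def HasFiniteRefinementOn {X ι : Type*} [TopologicalSpace X] (U : ι → Set X) (n : ℕ)
    (s : Set X) : Prop :=
  ∃ (κ : Type) (_ : Finite κ) (G : κ → Set X), (∀ j, IsOpen (G j)) ∧ s ⊆ ⋃ j, G j ∧
    (∀ j, ∃ i, G j ⊆ U i) ∧ ∀ x, {j | x ∈ G j}.ncard ≤ n + 1

namespace HasFiniteRefinementOn

variable {X ι : Type*} [TopologicalSpace X] {U : ι → Set X} {n : ℕ}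

lemma empty : HasFiniteRefinementOn U n ∅ :=
  ⟨Empty, inferInstance, Empty.elim, Empty.rec, empty_subset _, Empty.rec, fun x => by simp [eq_empty_of_isEmpty]⟩

lemma union {A B : Set X} (hA : IsClopen A) (hUA : HasFiniteRefinementOn U n A)
    (hUB : HasFiniteRefinementOn U n B) : HasFiniteRefinementOn U n (A ∪ B) := by
  obtain ⟨κ, _, G, hGo, hAG, hGU, hGord⟩ := hUA
  obtain ⟨κ', _, G', hGo', hBG', hGU', hGord'⟩ := hUB
  refine ⟨κ ⊕ κ', inferInstance, Sum.elim (fun j => A ∩ G j) (fun j => Aᶜ ∩ G' j),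
    ?_, ?_, ?_, fun x => ?_⟩
  · rintro (j | j)
    exacts [hA.isOpen.inter (hGo j), hA.isClosed.isOpen_compl.inter (hGo' j)]
  · rintro x (hx | hx)
    · obtain ⟨j, hj⟩ := mem_iUnion.1 (hAG hx)
      exact mem_iUnion.2 ⟨.inl j, hx, hj⟩
    · by_cases hxA : x ∈ A
      · obtain ⟨j, hj⟩ := mem_iUnion.1 (hAG hxA)
        exact mem_iUnion.2 ⟨.inl j, hxA, hj⟩
      · obtain ⟨j, hj⟩ := mem_iUnion.1 (hBG' hx)
        exact mem_iUnion.2 ⟨.inr j, hxA, hj⟩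
  · rintro (j | j)
    exacts [(hGU j).imp fun i => inter_subset_right.trans,
      (hGU' j).imp fun i => inter_subset_right.trans]
  · by_cases hxA : x ∈ A
    · have : {k | x ∈ Sum.elim (fun j => A ∩ G j) (fun j => Aᶜ ∩ G' j) k} =
          Sum.inl '' {j | x ∈ G j} := by
        ext (j | j) <;> simp [hxA]
      rw [this, ncard_image_of_injective _ Sum.inl_injective]
      exact hGord x
    · have : {k | x ∈ Sum.elim (fun j => A ∩ G j) (fun j => Aᶜ ∩ G' j) k} =
          Sum.inr '' {j | x ∈ G' j} := by
        ext (j | j) <;> simp [hxA]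
      rw [this, ncard_image_of_injective _ Sum.inr_injective]
      exact hGord' x

lemma biUnion {α : Type*} {A : α → Set X} (t : Finset α) (hA : ∀ a, IsClopen (A a))
    (hUA : ∀ a, HasFiniteRefinementOn U n (A a)) :
    HasFiniteRefinementOn U n (⋃ a ∈ t, A a) := by
  classical
  induction t using Finset.induction_on with
  | empty => simpa using empty
  | insert a t _ ih => simpa using (hUA a).union (hA a) ih

lemma mono {s t : Set X} (h : HasFiniteRefinementOn U n t) (hst : s ⊆ t) :
    HasFiniteRefinementOn U n s :=
  let ⟨κ, hκ, G, hGo, htG, hGU, hGord⟩ := h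
  ⟨κ, hκ, G, hGo, hst.trans htG, hGU, hGord⟩

end HasFiniteRefinementOn

lemma covDimLE_of_forall_hasFiniteRefinementOn_univ {X : Type*} [TopologicalSpace X] {n : ℕ}
    (h : ∀ (ι : Type) (U : ι → Set X), (∀ i, IsOpen (U i)) → (⋃ i, U i) = univ →
      HasFiniteRefinementOn U n univ) :
    CovDimLE X n := by
  intro ι U hUo hUc
  obtain ⟨κ, _, G, hGo, hG, hGU, hGord⟩ := h ι U hUo hUc
  exact ⟨κ, G, hGo, univ_subset_iff.1 hG, hGU, fun x => ⟨toFinite _, hGord x⟩⟩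

lemma exists_isClopen_mem_subset_of_connectedComponent_subset {X : Type*} [TopologicalSpace X]
    [T2Space X] [CompactSpace X] {x : X} {O : Set X} (hO : IsOpen O)
    (hxO : connectedComponent x ⊆ O) : ∃ A, IsClopen A ∧ x ∈ A ∧ A ⊆ O := by
  have : Nonempty {s : Set X // IsClopen s ∧ x ∈ s} := ⟨⟨univ, isClopen_univ, mem_univ x⟩⟩
  obtain ⟨⟨A, hA, hxA⟩, hAO⟩ := hO.isClosed_compl.isCompact.elim_directed_family_closed
    (fun s : {s : Set X // IsClopen s ∧ x ∈ s} => (s : Set X)) (fun s => s.2.1.isClosed)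
    (by rw [← connectedComponent_eq_iInter_isClopen, ← disjoint_iff_inter_eq_empty]
        exact disjoint_compl_left.mono_right hxO)
    fun s t => ⟨⟨s ∩ t, s.2.1.inter t.2.1, s.2.2, t.2.2⟩, inter_subset_left, inter_subset_right⟩
  exact ⟨A, hA, hxA, fun y hyA => by_contra fun hyO => hAO.subset ⟨hyO, hyA⟩⟩

lemma IsCompact.hasFiniteRefinementOn {X : Type*} [MetricSpace X] {C : Set X} (hC : IsCompact C)
    {n : ℕ} (hdim : CovDimLE C n) {ι : Type} {U : ι → Set X} (hU : ∀ i, IsOpen (U i))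
    (hCU : C ⊆ ⋃ i, U i) : HasFiniteRefinementOn U n C := by
  have : CompactSpace C := isCompact_iff_compactSpace.mp hC
  obtain ⟨κ, V, hVo, hVc, hVU, hVord⟩ := hdim ι (fun i => (↑) ⁻¹' U i)
    (fun i => (hU i).preimage continuous_subtype_val)
    (by rwa [← preimage_iUnion, ← univ_subset_iff, ← image_subset_iff, image_univ,
      Subtype.range_coe])
  obtain ⟨t, ht⟩ := isCompact_univ.elim_finite_subcover V hVo hVc.ge
  obtain ⟨v, hvc, hvcl, hvV⟩ := exists_iUnion_eq_closed_subset (fun j : t => hVo j)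
    (fun _ => toFinite _) (by simpa [iUnion_subtype, ← univ_subset_iff] using ht)
  choose i hi using fun j : t => hVU j
  let F : t → Set X := fun j => (↑) '' v j
  have hFc : ∀ j, IsCompact (F j) := fun j => (hvcl j).isCompact.image continuous_subtype_val
  have hFU : ∀ j, F j ⊆ U (i j) := fun j => image_subset_iff.2 ((hvV j).trans (hi j))
  have hCF : C ⊆ ⋃ j, F j := fun x hx => by
    obtain ⟨j, hj⟩ := mem_iUnion.1 (hvc.ge (mem_univ ⟨x, hx⟩))
    exact mem_iUnion.2 ⟨j, _, hj, rfl⟩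
  have hFord : ∀ x, {j | x ∈ F j}.ncard ≤ n + 1 := by
    intro x
    by_cases hx : x ∈ C
    · refine le_trans ?_ (hVord ⟨x, hx⟩).2
      refine ncard_le_ncard_of_injOn Subtype.val ?_ Subtype.val_injective.injOn
        (hVord ⟨x, hx⟩).1
      rintro j ⟨c, hc, rfl⟩
      exact hvV j hc
    · have : {j | x ∈ F j} = ∅ := eq_empty_of_forall_notMem fun j ⟨c, _, hcx⟩ => hx (hcx ▸ c.2)
      simp [this]
  obtain ⟨ε, ⟨hεord, hεU⟩, hε⟩ := (((eventually_ncard_thickening_le hFc hFord).and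
    (eventually_all.2 fun j => (hFc j).eventually_thickening_subset (hU (i j)) (hFU j))).and
    self_mem_nhdsWithin).exists
  exact ⟨t, inferInstance, fun j => thickening ε (F j), fun j => isOpen_thickening,
    hCF.trans (iUnion_mono fun j => self_subset_thickening hε _), fun j => ⟨i j, hεU j⟩, hεord⟩

theorem dim_le_of_components {X : Type*} [MetricSpace X] [CompactSpace X] (n : ℕ)
    (hcomp : ∀ x : X, CovDimLE ↥(connectedComponent x) n) :
    CovDimLE X n := by
  refine covDimLE_of_forall_hasFiniteRefinementOn_univ fun ι U hUo hUc => ?_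
  have hlocal : ∀ x, ∃ A, IsClopen A ∧ x ∈ A ∧ HasFiniteRefinementOn U n A := fun x => by
    obtain ⟨κ, _, G, hGo, hCG, hGU, hGord⟩ := isClosed_connectedComponent.isCompact
      |>.hasFiniteRefinementOn (hcomp x) hUo (hUc ▸ subset_univ _)
    obtain ⟨A, hA, hxA, hAG⟩ :=
      exists_isClopen_mem_subset_of_connectedComponent_subset (isOpen_iUnion hGo) hCG
    exact ⟨A, hA, hxA, κ, inferInstance, G, hGo, hAG, hGU, hGord⟩
  choose A hA hxA hUA using hlocal
  obtain ⟨t, ht⟩ := isCompact_univ.elim_finite_subcover A (fun x => (hA x).isOpen)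
    fun x _ => mem_iUnion.2 ⟨x, hxA x⟩
  exact (HasFiniteRefinementOn.biUnion t hA hUA).mono ht
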